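/- arXiv:1702.07055 — 2 statements merged into one kernel-verified Lean document; each statement's English description precedes it below -/
import Mathlib

section
/- Let d ≥ 2 be an integer and (f_j)_{j≥0} a sequence of degree-d homogeneous lifts on E = ℂ^{k+1} for which there are constants C ≥ 1 and reals ε_j ≥ 0 with e^{−ε_j}·‖z‖^d ≤ ‖f_j(z)‖ ≤ C·‖z‖^d for all z ∈ E and all j, and ε_j/j → 0 as j → ∞. Then the functions G_n(z) := d^{−n}·log‖F_n(z)‖ converge, as n → ∞, uniformly on the unit sphere {z ∈ E : ‖z‖ = 1} to a continuous function G, and moreover G_n(z) converges for every z ∈ E with z ≠ 0. -/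
/-!
Writing `u n z = d⁻ⁿ log ‖F_n z‖`, the two growth bounds give
`|log ‖f_n w‖ - d log ‖w‖| ≤ ε_n + log C` for every `w ≠ 0`, hence
`|u (n+1) z - u n z| ≤ (ε_n + log C) / d^(n+1)` for every `z ≠ 0`. Since `ε_n = o(n)`, these bounds are
summable, so `u n` is uniformly Cauchy on `ℂ^{k+1} \ {0}`; its uniform limit is continuous there.
-/

open Filter Metric

def seqF {X : Type*} (f : ℕ → X → X) : ℕ → X → X
  | 0 => id
  | n + 1 => f n ∘ seqF f n

open Set Topology Asymptotics

section seqF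

variable {X : Type*} {f : ℕ → X → X}

theorem seqF_succ_apply (n : ℕ) (x : X) : seqF f (n + 1) x = f n (seqF f n x) := rfl

theorem mapsTo_seqF {s : Set X} (hf : ∀ j, MapsTo (f j) s s) (n : ℕ) : MapsTo (seqF f n) s s := by
  induction n with
  | zero => exact mapsTo_id s
  | succ n ih => exact (hf n).comp ih

theorem continuous_seqF [TopologicalSpace X] (hf : ∀ j, Continuous (f j)) (n : ℕ) :
    Continuous (seqF f n) := by
  induction n with
  | zero => exact continuous_id
  | succ n ih => exact (hf n).comp ih

end seqF

theorem abs_log_sub_mul_log_le {x y e C : ℝ} (d : ℕ) (hx : 0 < x) (he : 0 ≤ e) (hC : 1 ≤ C)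
    (hlo : Real.exp (-e) * x ^ d ≤ y) (hup : y ≤ C * x ^ d) :
    |Real.log y - d * Real.log x| ≤ e + Real.log C := by
  have hlo_pos : 0 < Real.exp (-e) * x ^ d := by positivity
  have hlog_lo := Real.log_le_log hlo_pos hlo
  have hlog_up := Real.log_le_log (hlo_pos.trans_le hlo) hup
  rw [Real.log_mul (Real.exp_pos _).ne' (by positivity), Real.log_exp, Real.log_pow] at hlog_lo
  rw [Real.log_mul (by positivity) (by positivity), Real.log_pow] at hlog_up
  have hlogC := Real.log_nonneg hC
  rw [abs_le]
  constructor <;> linarith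

theorem dist_div_pow_div_pow_succ (a b : ℝ) {D : ℝ} (hD : 0 < D) (n : ℕ) :
    dist (a / D ^ n) (b / D ^ (n + 1)) = |b - D * a| / D ^ (n + 1) := by
  have hdiff : b / D ^ (n + 1) - a / D ^ n = (b - D * a) / D ^ (n + 1) := by
    rw [pow_succ]
    field_simp
  rw [Real.dist_eq, abs_sub_comm, hdiff, abs_div, abs_of_pos (pow_pos hD _)]

theorem summable_div_pow_of_tendsto_div_nat {r : ℝ} (hr : 1 < r) {ε : ℕ → ℝ}
    (hε : Tendsto (fun j ↦ ε j / j) atTop (𝓝 0)) : Summable fun j ↦ ε j / r ^ j := by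
  have hO : ε =O[atTop] (fun j ↦ (j : ℝ)) := by
    refine ((isLittleO_iff_tendsto' ?_).2 hε).isBigO
    exact eventually_atTop.2 ⟨1, fun j hj h0 ↦ absurd h0 (Nat.cast_ne_zero.2 (by omega))⟩
  have hr' : ‖r⁻¹‖ < 1 := by
    rw [norm_inv, Real.norm_of_nonneg (by linarith)]
    exact inv_lt_one_of_one_lt₀ hr
  have hgeom : Summable fun j : ℕ ↦ (j : ℝ) * r⁻¹ ^ j := by
    simpa using summable_pow_mul_geometric_of_norm_lt_one 1 hr'
  refine summable_of_isBigO_nat hgeom ?_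
  simpa only [div_eq_mul_inv, inv_pow] using hO.mul (isBigO_refl (fun j ↦ r⁻¹ ^ j) atTop)

theorem tendstoUniformlyOn_limUnder_of_dist_le_of_summable {X Y : Type*} [PseudoMetricSpace Y]
    [CompleteSpace Y] [Nonempty Y] {u : ℕ → X → Y} {s : Set X} {b : ℕ → ℝ} (hb : Summable b)
    (hu : ∀ n, ∀ x ∈ s, dist (u n x) (u (n + 1) x) ≤ b n) :
    TendstoUniformlyOn u (fun x ↦ limUnder atTop (u · x)) atTop s := by
  rw [Metric.tendstoUniformlyOn_iff]
  intro δ hδ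
  filter_upwards [(tendsto_sum_nat_add b).eventually (gt_mem_nhds hδ)] with n hn x hx
  have hlim : Tendsto (u · x) atTop (𝓝 (limUnder atTop (u · x))) :=
    (cauchySeq_of_dist_le_of_summable b (hu · x hx) hb).tendsto_limUnder
  rw [dist_comm]
  calc _ ≤ ∑' m, b (n + m) := dist_le_tsum_of_dist_le_of_tendsto b (hu · x hx) hb hlim n
    _ < δ := by simpa only [add_comm] using hn

section GrowthBounds

variable {E : Type*} [NormedAddCommGroup E] {f : ℕ → E → E} {d : ℕ} {ε : ℕ → ℝ}

theorem mapsTo_compl_zero_of_exp_mul_norm_pow_le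
    (h_lower : ∀ j z, Real.exp (-ε j) * ‖z‖ ^ d ≤ ‖f j z‖) (j : ℕ) :
    MapsTo (f j) {0}ᶜ {0}ᶜ := fun z hz ↦
  norm_pos_iff.1 <| (by positivity [norm_pos_iff.2 hz] : 0 < Real.exp (-ε j) * ‖z‖ ^ d).trans_le
    (h_lower j z)

theorem dist_log_norm_seqF_div_pow_succ_le (hd : 0 < d) {C : ℝ} (hC : 1 ≤ C)
    (hε_nonneg : ∀ j, 0 ≤ ε j)
    (h_lower : ∀ j z, Real.exp (-ε j) * ‖z‖ ^ d ≤ ‖f j z‖)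
    (h_upper : ∀ j z, ‖f j z‖ ≤ C * ‖z‖ ^ d) {n : ℕ} {z : E} (hz : seqF f n z ≠ 0) :
    dist (Real.log ‖seqF f n z‖ / (d : ℝ) ^ n) (Real.log ‖seqF f (n + 1) z‖ / (d : ℝ) ^ (n + 1))
      ≤ (ε n + Real.log C) / (d : ℝ) ^ (n + 1) := by
  rw [dist_div_pow_div_pow_succ _ _ (Nat.cast_pos.2 hd), seqF_succ_apply]
  gcongr
  exact abs_log_sub_mul_log_le d (norm_pos_iff.2 hz) (hε_nonneg n) hC (h_lower n _) (h_upper n _)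

end GrowthBounds

theorem green_function_exists_general
    (k : ℕ) (d : ℕ) (hd : 2 ≤ d)
    (f : ℕ → EuclideanSpace ℂ (Fin (k + 1)) → EuclideanSpace ℂ (Fin (k + 1)))
    (hf_cont : ∀ j, Continuous (f j))
    (C : ℝ) (hC : 1 ≤ C)
    (ε : ℕ → ℝ) (hε_nonneg : ∀ j, 0 ≤ ε j)
    (h_lower : ∀ j z, Real.exp (-ε j) * ‖z‖ ^ d ≤ ‖f j z‖)
    (h_upper : ∀ j z, ‖f j z‖ ≤ C * ‖z‖ ^ d)
    (hε : Tendsto (fun j : ℕ => ε j / j) atTop (nhds 0)) :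
    ∃ G : EuclideanSpace ℂ (Fin (k + 1)) → ℝ,
      ContinuousOn G (sphere (0 : EuclideanSpace ℂ (Fin (k + 1))) 1) ∧
      TendstoUniformlyOn
        (fun n z => Real.log ‖seqF f n z‖ / (d : ℝ) ^ n) G atTop
        (sphere (0 : EuclideanSpace ℂ (Fin (k + 1))) 1) ∧
      ∀ z, z ≠ 0 →
        Tendsto (fun n => Real.log ‖seqF f n z‖ / (d : ℝ) ^ n) atTop (nhds (G z)) := by
  have hd1 : (1 : ℝ) < d := by exact_mod_cast hd
  have hmaps := mapsTo_seqF (mapsTo_compl_zero_of_exp_mul_norm_pow_le h_lower)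
  have hsum : Summable fun n ↦ (ε n + Real.log C) / (d : ℝ) ^ (n + 1) := by
    have hεC : Tendsto (fun j : ℕ ↦ (ε j + Real.log C) / j) atTop (𝓝 0) := by
      simpa [add_div] using hε.add (tendsto_const_div_atTop_nhds_zero_nat (Real.log C))
    simpa only [pow_succ, div_div] using (summable_div_pow_of_tendsto_div_nat hd1 hεC).div_const d
  have hunif := tendstoUniformlyOn_limUnder_of_dist_le_of_summable
    (u := fun n z ↦ Real.log ‖seqF f n z‖ / (d : ℝ) ^ n) (s := {0}ᶜ) hsum fun n z hz ↦
    dist_log_norm_seqF_div_pow_succ_le (by omega) hC hε_nonneg h_lower h_upper (hmaps n hz)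
  have hcont : ∀ n, ContinuousOn (fun z ↦ Real.log ‖seqF f n z‖ / (d : ℝ) ^ n) {0}ᶜ := fun n ↦
    ((continuous_seqF hf_cont n).norm.continuousOn.log fun z hz ↦
      norm_ne_zero_iff.2 (hmaps n hz)).div_const _
  have hsphere : sphere (0 : EuclideanSpace ℂ (Fin (k + 1))) 1 ⊆ {0}ᶜ := fun z hz ↦
    ne_zero_of_mem_unit_sphere ⟨z, hz⟩
  exact ⟨_, (hunif.continuousOn (.of_forall hcont)).mono hsphere, hunif.mono hsphere,
    fun z hz ↦ hunif.tendsto_at hz⟩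

/-- Existence and continuity of the lifted Green function of a non-autonomous sequence of
degree-`d` homogeneous maps on `ℂ^{k+1}` satisfying the growth conditions (A) and (B):
`d^{-n} log‖F_n‖` converges uniformly on the unit sphere to a continuous function, and
converges at every nonzero point. -/
theorem green_function_exists
    (k : ℕ) (hk : 1 ≤ k) (d : ℕ) (hd : 2 ≤ d)
    (f : ℕ → EuclideanSpace ℂ (Fin (k + 1)) → EuclideanSpace ℂ (Fin (k + 1)))
    (hf_cont : ∀ j, Continuous (f j))
    (hf_hom : ∀ j (c : ℂ) z, f j (c • z) = c ^ d • f j z)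
    (C : ℝ) (hC : 1 ≤ C)
    (ε : ℕ → ℝ) (hε_nonneg : ∀ j, 0 ≤ ε j)
    (h_lower : ∀ j z, Real.exp (-ε j) * ‖z‖ ^ d ≤ ‖f j z‖)
    (h_upper : ∀ j z, ‖f j z‖ ≤ C * ‖z‖ ^ d)
    (hε : Tendsto (fun j : ℕ => ε j / j) atTop (nhds 0)) :
    ∃ G : EuclideanSpace ℂ (Fin (k + 1)) → ℝ,
      ContinuousOn G (sphere (0 : EuclideanSpace ℂ (Fin (k + 1))) 1) ∧
      TendstoUniformlyOn
        (fun n z => Real.log ‖seqF f n z‖ / (d : ℝ) ^ n) G atTop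
        (sphere (0 : EuclideanSpace ℂ (Fin (k + 1))) 1) ∧
      ∀ z, z ≠ 0 →
        Tendsto (fun n => Real.log ‖seqF f n z‖ / (d : ℝ) ^ n) atTop (nhds (G z)) :=
  green_function_exists_general k d hd f hf_cont C hC ε hε_nonneg h_lower h_upper hε
end

section
/- Let d ≥ 2 be an integer and (f_j)_{j≥0} a sequence of degree-d homogeneous lifts on E = ℂ^{k+1} such that there are constants 0 < c ≤ C with c·‖z‖^d ≤ ‖f_j(z)‖ ≤ C·‖z‖^d for all z ∈ E and all j (a bounded sequence). Assume further: (i) there is K > 0 such that |log‖f_j(x)‖ − log‖f_j(y)‖| ≤ K·‖x − y‖ for all x, y on the unit sphere of E and all j; (ii) there are constants B ≥ 1 and Λ ≥ 1 such that for every n the normalized map x ↦ F_n(x)/‖F_n(x)‖ is Lipschitz on the unit sphere with constant B·Λ^n. Let G(z) := lim_{n→∞} d^{−n} log‖F_n(z)‖. Then for every α ∈ (0,1] with Λ^α < d there is a constant C_α > 0 such that |G(x) − G(y)| ≤ C_α·‖x − y‖^α for all x, y on the unit sphere of E. -/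
open Filter Metric

private lemma min_le_rpow_mul {a b α : ℝ} (ha : 0 < a) (hb : 0 ≤ b)
    (hα : 0 < α) (hα1 : α ≤ 1) : min a b ≤ a ^ (1 - α) * b ^ α := by
  rcases hb.eq_or_lt with h0 | hb
  · rw [← h0, Real.zero_rpow hα.ne', mul_zero]
    exact min_le_right _ _
  · have hm : 0 < min a b := lt_min ha hb
    have h1 : min a b = min a b ^ (1 - α) * min a b ^ α := by
      rw [← Real.rpow_add hm, sub_add_cancel, Real.rpow_one]
    calc min a b = min a b ^ (1 - α) * min a b ^ α := h1
      _ ≤ a ^ (1 - α) * b ^ α := by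
          have h2 : min a b ^ (1 - α) ≤ a ^ (1 - α) :=
            Real.rpow_le_rpow hm.le (min_le_left _ _) (by linarith)
          have h3 : min a b ^ α ≤ b ^ α :=
            Real.rpow_le_rpow hm.le (min_le_right _ _) hα.le
          have h4 : (0:ℝ) ≤ min a b ^ α := Real.rpow_nonneg hm.le _
          have h5 : (0:ℝ) ≤ a ^ (1 - α) := Real.rpow_nonneg ha.le _
          exact mul_le_mul h2 h3 h4 h5

/-- Hölder continuity of the lifted Green function of a bounded non-autonomous sequence of
degree-`d` homogeneous maps, for every Hölder exponent `α` with `Λ^α < d`. -/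
theorem green_function_holder
    (k : ℕ) (hk : 1 ≤ k) (d : ℕ) (hd : 2 ≤ d)
    (f : ℕ → EuclideanSpace ℂ (Fin (k + 1)) → EuclideanSpace ℂ (Fin (k + 1)))
    (hf_cont : ∀ j, Continuous (f j))
    (hf_hom : ∀ j (c : ℂ) z, f j (c • z) = c ^ d • f j z)
    (c C : ℝ) (hc : 0 < c) (hcC : c ≤ C)
    (h_lower : ∀ j z, c * ‖z‖ ^ d ≤ ‖f j z‖)
    (h_upper : ∀ j z, ‖f j z‖ ≤ C * ‖z‖ ^ d)
    (K : ℝ) (hK : 0 < K)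
    (h_logLip : ∀ j, ∀ x ∈ sphere (0 : EuclideanSpace ℂ (Fin (k + 1))) 1,
      ∀ y ∈ sphere (0 : EuclideanSpace ℂ (Fin (k + 1))) 1,
        |Real.log ‖f j x‖ - Real.log ‖f j y‖| ≤ K * ‖x - y‖)
    (B Λ : ℝ) (hB : 1 ≤ B) (hΛ : 1 ≤ Λ)
    (h_normLip : ∀ n : ℕ, ∀ x ∈ sphere (0 : EuclideanSpace ℂ (Fin (k + 1))) 1,
      ∀ y ∈ sphere (0 : EuclideanSpace ℂ (Fin (k + 1))) 1,
        ‖(‖seqF f n x‖⁻¹ • seqF f n x) - (‖seqF f n y‖⁻¹ • seqF f n y)‖ ≤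
          B * Λ ^ n * ‖x - y‖)
    (G : EuclideanSpace ℂ (Fin (k + 1)) → ℝ)
    (hG : ∀ z, z ≠ 0 →
      Tendsto (fun n => Real.log ‖seqF f n z‖ / (d : ℝ) ^ n) atTop (nhds (G z))) :
    ∀ α : ℝ, 0 < α → α ≤ 1 → Λ ^ α < (d : ℝ) →
      ∃ Cα : ℝ, 0 < Cα ∧
        ∀ x ∈ sphere (0 : EuclideanSpace ℂ (Fin (k + 1))) 1,
          ∀ y ∈ sphere (0 : EuclideanSpace ℂ (Fin (k + 1))) 1,
            |G x - G y| ≤ Cα * ‖x - y‖ ^ α := by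
  classical
  intro α hα0 hα1 hΛα
  have hd0 : (0:ℝ) < d := by exact_mod_cast (by omega : 0 < d)
  have hC : 0 < C := hc.trans_le hcC
  have hΛ0 : (0:ℝ) ≤ Λ := by linarith
  -- norms of iterates are positive
  have hFpos : ∀ n (z : EuclideanSpace ℂ (Fin (k + 1))), z ≠ 0 → 0 < ‖seqF f n z‖ := by
    intro n
    induction n with
    | zero => intro z hz; simpa [seqF] using norm_pos_iff.mpr hz
    | succ n ih =>
      intro z hz
      have h1 := ih z hz
      have h2 : 0 < c * ‖seqF f n z‖ ^ d := by positivity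
      have h3 : (0:ℝ) < ‖f n (seqF f n z)‖ := h2.trans_le (h_lower n _)
      simpa [seqF] using h3
  -- scaling under real multiples
  have h_scale : ∀ j (r : ℝ) (z : EuclideanSpace ℂ (Fin (k + 1))), 0 ≤ r →
      ‖f j (r • z)‖ = r ^ d * ‖f j z‖ := by
    intro j r z hr
    have h1 : (r : ℂ) • z = r • z := Complex.coe_smul r z
    rw [← h1, hf_hom j, norm_smul]
    simp [abs_of_nonneg hr]
  -- the normalized points
  set w : ℕ → EuclideanSpace ℂ (Fin (k + 1)) → EuclideanSpace ℂ (Fin (k + 1)) :=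
    fun m x => ‖seqF f m x‖⁻¹ • seqF f m x with hwdef
  set g : ℕ → EuclideanSpace ℂ (Fin (k + 1)) → ℝ :=
    fun m x => Real.log ‖f m (w m x)‖ with hgdef
  have hwnorm : ∀ m (x : EuclideanSpace ℂ (Fin (k + 1))), x ≠ 0 → ‖w m x‖ = 1 := by
    intro m x hx
    have hF := hFpos m x hx
    rw [hwdef]
    simp only [norm_smul, norm_inv, norm_norm]
    field_simp
  have hwpos : ∀ m (x : EuclideanSpace ℂ (Fin (k + 1))), x ≠ 0 → 0 < ‖f m (w m x)‖ := by
    intro m x hx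
    have h1 : 0 < c * ‖w m x‖ ^ d := by
      rw [hwnorm m x hx]; simpa using hc
    exact h1.trans_le (h_lower m _)
  -- recursion for logs
  have hrec : ∀ m (x : EuclideanSpace ℂ (Fin (k + 1))), x ≠ 0 →
      Real.log ‖seqF f (m+1) x‖ = d * Real.log ‖seqF f m x‖ + g m x := by
    intro m x hx
    have hF : 0 < ‖seqF f m x‖ := hFpos m x hx
    have hFx : seqF f m x = ‖seqF f m x‖ • w m x := by
      rw [hwdef]
      simp only
      rw [smul_smul, mul_inv_cancel₀ hF.ne', one_smul]
    have h2 : ‖f m (seqF f m x)‖ = ‖seqF f m x‖ ^ d * ‖f m (w m x)‖ := by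
      conv_lhs => rw [hFx]
      exact h_scale m _ _ hF.le
    have h3 : seqF f (m+1) x = f m (seqF f m x) := rfl
    rw [h3, h2, Real.log_mul (by positivity) (hwpos m x hx).ne', Real.log_pow]
  -- sum formula
  have hsum : ∀ (x : EuclideanSpace ℂ (Fin (k + 1))), ‖x‖ = 1 → ∀ n,
      Real.log ‖seqF f n x‖ / (d:ℝ)^n = ∑ m ∈ Finset.range n, g m x / (d:ℝ)^(m+1) := by
    intro x hx
    have hx0 : x ≠ 0 := by
      intro h; rw [h, norm_zero] at hx; norm_num at hx
    intro n
    induction n with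
    | zero => simp [seqF, hx]
    | succ n ih =>
      rw [Finset.sum_range_succ, ← ih, hrec n x hx0]
      have hdn : ((d:ℝ))^n ≠ 0 := by positivity
      field_simp
      ring
  -- uniform bound on g
  set M : ℝ := |Real.log c| + |Real.log C| + 1 with hMdef
  have hMpos : 0 < M := by positivity
  have hgM : ∀ m (x : EuclideanSpace ℂ (Fin (k + 1))), x ≠ 0 → |g m x| ≤ M := by
    intro m x hx
    have hlo : c ≤ ‖f m (w m x)‖ := by
      have := h_lower m (w m x); rwa [hwnorm m x hx, one_pow, mul_one] at this
    have hhi : ‖f m (w m x)‖ ≤ C := by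
      have := h_upper m (w m x); rwa [hwnorm m x hx, one_pow, mul_one] at this
    rw [abs_le]
    constructor
    · have h1 : Real.log c ≤ Real.log ‖f m (w m x)‖ := Real.log_le_log hc hlo
      have h2 : -|Real.log c| ≤ Real.log c := neg_abs_le _
      have h3 : (0:ℝ) ≤ |Real.log C| := abs_nonneg _
      rw [hMdef]; simp only [hgdef]; linarith
    · have h1 : Real.log ‖f m (w m x)‖ ≤ Real.log C :=
        Real.log_le_log (hwpos m x hx) hhi
      have h2 : Real.log C ≤ |Real.log C| := le_abs_self _
      have h3 : (0:ℝ) ≤ |Real.log c| := abs_nonneg _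
      rw [hMdef]; simp only [hgdef]; linarith
  -- Lipschitz-type bound on differences of g
  have hdiff : ∀ m, ∀ x ∈ sphere (0 : EuclideanSpace ℂ (Fin (k + 1))) 1,
      ∀ y ∈ sphere (0 : EuclideanSpace ℂ (Fin (k + 1))) 1,
        |g m x - g m y| ≤ min (2*M) (K*B*Λ^m*‖x - y‖) := by
    intro m x hx y hy
    have hx1 : ‖x‖ = 1 := mem_sphere_zero_iff_norm.mp hx
    have hy1 : ‖y‖ = 1 := mem_sphere_zero_iff_norm.mp hy
    have hx0 : x ≠ 0 := by intro h; rw [h, norm_zero] at hx1; norm_num at hx1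
    have hy0 : y ≠ 0 := by intro h; rw [h, norm_zero] at hy1; norm_num at hy1
    refine le_min ?_ ?_
    · have h1 := hgM m x hx0
      have h2 := hgM m y hy0
      calc |g m x - g m y| ≤ |g m x| + |g m y| := abs_sub _ _
        _ ≤ 2*M := by linarith
    · have hwx : w m x ∈ sphere (0 : EuclideanSpace ℂ (Fin (k + 1))) 1 :=
        mem_sphere_zero_iff_norm.mpr (hwnorm m x hx0)
      have hwy : w m y ∈ sphere (0 : EuclideanSpace ℂ (Fin (k + 1))) 1 :=
        mem_sphere_zero_iff_norm.mpr (hwnorm m y hy0)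
      have h1 := h_logLip m (w m x) hwx (w m y) hwy
      have h2 : ‖w m x - w m y‖ ≤ B * Λ^m * ‖x - y‖ := h_normLip m x hx y hy
      calc |g m x - g m y| ≤ K * ‖w m x - w m y‖ := h1
        _ ≤ K * (B * Λ^m * ‖x - y‖) := by
            exact mul_le_mul_of_nonneg_left h2 hK.le
        _ = K*B*Λ^m*‖x - y‖ := by ring
  -- the constant
  set A : ℝ := (2*M)^(1-α) * (K*B)^α with hAdef
  have hKB : (0:ℝ) < K*B := by nlinarith
  have hApos : 0 < A := by
    rw [hAdef]
    have := Real.rpow_pos_of_pos (by linarith : (0:ℝ) < 2*M) (1-α)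
    have := Real.rpow_pos_of_pos hKB α
    positivity
  have hdΛ : 0 < (d:ℝ) - Λ^α := sub_pos.mpr hΛα
  have hΛα0 : (0:ℝ) < Λ^α := Real.rpow_pos_of_pos (by linarith) α
  refine ⟨A * ((d:ℝ) - Λ^α)⁻¹, by positivity, ?_⟩
  intro x hx y hy
  have hx1 : ‖x‖ = 1 := mem_sphere_zero_iff_norm.mp hx
  have hy1 : ‖y‖ = 1 := mem_sphere_zero_iff_norm.mp hy
  have hx0 : x ≠ 0 := by intro h; rw [h, norm_zero] at hx1; norm_num at hx1
  have hy0 : y ≠ 0 := by intro h; rw [h, norm_zero] at hy1; norm_num at hy1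
  set t : ℝ := ‖x - y‖ with htdef
  have ht0 : 0 ≤ t := norm_nonneg _
  -- limits of the partial sums
  have hTx : Tendsto (fun n => ∑ m ∈ Finset.range n, g m x / (d:ℝ)^(m+1)) atTop (nhds (G x)) :=
    (hG x hx0).congr (fun n => hsum x hx1 n)
  have hTy : Tendsto (fun n => ∑ m ∈ Finset.range n, g m y / (d:ℝ)^(m+1)) atTop (nhds (G y)) :=
    (hG y hy0).congr (fun n => hsum y hy1 n)
  have hT : Tendsto (fun n => |(∑ m ∈ Finset.range n, g m x / (d:ℝ)^(m+1)) -
      (∑ m ∈ Finset.range n, g m y / (d:ℝ)^(m+1))|) atTop (nhds |G x - G y|) :=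
    (hTx.sub hTy).abs
  -- geometric sum bound
  have hgeom : ∀ n, ∑ m ∈ Finset.range n, (Λ^α)^m / (d:ℝ)^(m+1) ≤ ((d:ℝ) - Λ^α)⁻¹ := by
    intro n
    have hq0 : (0:ℝ) ≤ Λ^α / d := by positivity
    have hq1 : Λ^α / (d:ℝ) < 1 := (div_lt_one hd0).mpr hΛα
    have heq : ∑ m ∈ Finset.range n, (Λ^α)^m / (d:ℝ)^(m+1)
        = (∑ m ∈ Finset.range n, (Λ^α/(d:ℝ))^m) / d := by
      rw [Finset.sum_div]
      refine Finset.sum_congr rfl ?_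
      intro m _
      rw [div_pow, pow_succ]
      field_simp
    rw [heq]
    have h1 : (∑ m ∈ Finset.range n, (Λ^α/(d:ℝ))^m) ≤ (1 - Λ^α/(d:ℝ))⁻¹ := by
      refine le_trans (Summable.sum_le_tsum (Finset.range n) (fun m _ => by positivity)
        (summable_geometric_of_lt_one hq0 hq1)) ?_
      rw [tsum_geometric_of_lt_one hq0 hq1]
    have h2 : (1 - Λ^α/(d:ℝ))⁻¹ / d = ((d:ℝ) - Λ^α)⁻¹ := by
      rw [div_eq_mul_inv, ← mul_inv]
      congr 1
      field_simp
    rw [← h2]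
    gcongr
  -- uniform bound on partial-sum differences
  have key : ∀ n, |(∑ m ∈ Finset.range n, g m x / (d:ℝ)^(m+1)) -
      (∑ m ∈ Finset.range n, g m y / (d:ℝ)^(m+1))| ≤ A * ((d:ℝ) - Λ^α)⁻¹ * t ^ α := by
    intro n
    have hterm : ∀ m ∈ Finset.range n,
        |g m x / (d:ℝ)^(m+1) - g m y / (d:ℝ)^(m+1)|
          ≤ A * t ^ α * ((Λ^α)^m / (d:ℝ)^(m+1)) := by
      intro m _
      rw [div_sub_div_same, abs_div, abs_of_pos (by positivity : (0:ℝ) < (d:ℝ)^(m+1))]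
      have h1 : |g m x - g m y| ≤ min (2*M) (K*B*Λ^m*t) := hdiff m x hx y hy
      have h2 : min (2*M) (K*B*Λ^m*t) ≤ (2*M)^(1-α) * (K*B*Λ^m*t)^α :=
        min_le_rpow_mul (by linarith) (by positivity) hα0 hα1
      have h3 : (K*B*Λ^m*t)^α = (K*B)^α * (Λ^α)^m * t^α := by
        have hΛm : (Λ^m : ℝ)^α = (Λ^α)^m := by
          rw [← Real.rpow_natCast Λ m, ← Real.rpow_natCast (Λ^α) m,
            ← Real.rpow_mul hΛ0, ← Real.rpow_mul hΛ0, mul_comm]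
        rw [show K*B*Λ^m*t = (K*B) * (Λ^m) * t by ring,
          Real.mul_rpow (by positivity) ht0,
          Real.mul_rpow hKB.le (by positivity), hΛm]
      have h4 : |g m x - g m y| ≤ A * t^α * (Λ^α)^m := by
        calc |g m x - g m y| ≤ (2*M)^(1-α) * (K*B*Λ^m*t)^α := h1.trans h2
          _ = A * t^α * (Λ^α)^m := by rw [h3, hAdef]; ring
      rw [div_le_iff₀ (by positivity : (0:ℝ) < (d:ℝ)^(m+1))]
      calc |g m x - g m y| ≤ A * t^α * (Λ^α)^m := h4
        _ = A * t ^ α * ((Λ^α)^m / (d:ℝ)^(m+1)) * (d:ℝ)^(m+1) := by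
            field_simp
    calc |(∑ m ∈ Finset.range n, g m x / (d:ℝ)^(m+1)) -
          (∑ m ∈ Finset.range n, g m y / (d:ℝ)^(m+1))|
        = |∑ m ∈ Finset.range n, (g m x / (d:ℝ)^(m+1) - g m y / (d:ℝ)^(m+1))| := by
          rw [Finset.sum_sub_distrib]
      _ ≤ ∑ m ∈ Finset.range n, |g m x / (d:ℝ)^(m+1) - g m y / (d:ℝ)^(m+1)| :=
          Finset.abs_sum_le_sum_abs _ _
      _ ≤ ∑ m ∈ Finset.range n, A * t ^ α * ((Λ^α)^m / (d:ℝ)^(m+1)) :=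
          Finset.sum_le_sum hterm
      _ = A * t ^ α * ∑ m ∈ Finset.range n, (Λ^α)^m / (d:ℝ)^(m+1) := by
          rw [Finset.mul_sum]
      _ ≤ A * t ^ α * ((d:ℝ) - Λ^α)⁻¹ := by
          refine mul_le_mul_of_nonneg_left (hgeom n) ?_
          positivity
      _ = A * ((d:ℝ) - Λ^α)⁻¹ * t ^ α := by ring
  exact le_of_tendsto hT (Filter.Eventually.of_forall key)
end
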